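/- Let A be an n×n complex matrix of index k and let m ≥ 1 be an integer. Then rank(A^{#_m}) = rank(A^k). -/

import Mathlib

/-!
Write `C` for the core-EP inverse and `P = A ^ m * (A ^ m)†`. Since `rank (A ^ k) = rank (A ^ (k + 1))`,
`R(A ^ i) = R(A ^ k)` for every `i ≥ k`. The upper bound is
`rank (C ^ (m + 1) * A ^ m * P) ≤ rank C = rank (A ^ k)`. For the lower bound, `E = A * C` is an
idempotent with `R(E) = R(A ^ k)`, so it fixes every `A ^ i` with `i ≥ k`, and
`A ^ (m + 1) * C ^ (m + 1) = E`. As `P` fixes `A ^ (m + k)`, this gives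
`A ^ (m + 1) * (C ^ (m + 1) * A ^ m * P) * A ^ (m + k) = A ^ (2 * m + k)`,
whose rank is again `rank (A ^ k)`.
-/

open Matrix

/-- `X` is the Moore–Penrose inverse of `A` (four Penrose equations). -/
def MoorePenroseOf {n : ℕ} (A X : Matrix (Fin n) (Fin n) ℂ) : Prop :=
  A * X * A = A ∧ X * A * X = X ∧ (A * X)ᴴ = A * X ∧ (X * A)ᴴ = X * A

/-- Column space of a square complex matrix. -/
noncomputable def colSpace {n : ℕ} (A : Matrix (Fin n) (Fin n) ℂ) : Submodule ℂ (Fin n → ℂ) :=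
  LinearMap.range A.mulVecLin

/-- Null space of a square complex matrix. -/
noncomputable def nullSpace {n : ℕ} (A : Matrix (Fin n) (Fin n) ℂ) : Submodule ℂ (Fin n → ℂ) :=
  LinearMap.ker A.mulVecLin

/-- `k` is the index of `A`: the smallest nonnegative integer with
`rank(A^k) = rank(A^(k+1))`. -/
def HasIndex {n : ℕ} (A : Matrix (Fin n) (Fin n) ℂ) (k : ℕ) : Prop :=
  (A ^ k).rank = (A ^ (k + 1)).rank ∧ ∀ j < k, (A ^ j).rank ≠ (A ^ (j + 1)).rank

/-- `X` is the core-EP inverse of `A` (where `k = Ind(A)`): `XAX = X` and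
`R(X) = R(Xᴴ) = R(A^k)`. -/
def IsCoreEP {n : ℕ} (A X : Matrix (Fin n) (Fin n) ℂ) (k : ℕ) : Prop :=
  X * A * X = X ∧ colSpace X = colSpace (A ^ k) ∧ colSpace Xᴴ = colSpace (A ^ k)

section ColSpace

variable {n : ℕ} {A B E M : Matrix (Fin n) (Fin n) ℂ}

lemma rank_eq_rank_of_colSpace_eq (h : colSpace A = colSpace B) : A.rank = B.rank :=
  congrArg (fun S : Submodule ℂ (Fin n → ℂ) => Module.finrank ℂ S) h

lemma colSpace_mul (A B : Matrix (Fin n) (Fin n) ℂ) :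
    colSpace (A * B) = (colSpace B).map A.mulVecLin := by
  rw [colSpace, Matrix.mulVecLin_mul, LinearMap.range_comp]
  rfl

lemma colSpace_mul_le (A B : Matrix (Fin n) (Fin n) ℂ) : colSpace (A * B) ≤ colSpace A := by
  rw [colSpace, Matrix.mulVecLin_mul]
  exact LinearMap.range_comp_le_range _ _

lemma colSpace_pow_eq_of_rank_pow_eq {k : ℕ} (hA : (A ^ k).rank = (A ^ (k + 1)).rank)
    {j : ℕ} (hj : k ≤ j) : colSpace (A ^ j) = colSpace (A ^ k) := by
  have hsucc : colSpace (A ^ (k + 1)) = colSpace (A ^ k) := by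
    refine Submodule.eq_of_le_of_finrank_le ?_ hA.le
    rw [pow_succ]
    exact colSpace_mul_le _ _
  induction j, hj using Nat.le_induction with
  | base => rfl
  | succ j _ ih => rw [pow_succ', colSpace_mul, ih, ← colSpace_mul, ← pow_succ', hsucc]

lemma IsIdempotentElem.mul_eq_of_colSpace_le (hE : IsIdempotentElem E)
    (h : colSpace M ≤ colSpace E) : E * M = M := by
  refine Matrix.ext_iff_mulVec.mpr fun v => ?_
  obtain ⟨w, hw⟩ := h ⟨v, rfl⟩
  change E *ᵥ w = M *ᵥ v at hw
  rw [← Matrix.mulVec_mulVec, ← hw, Matrix.mulVec_mulVec, hE.eq]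

end ColSpace

namespace IsCoreEP

variable {n k : ℕ} {A C M : Matrix (Fin n) (Fin n) ℂ}

lemma isIdempotentElem_mul (hC : IsCoreEP A C k) : IsIdempotentElem (A * C) := by
  rw [IsIdempotentElem, mul_assoc, ← mul_assoc C, hC.1]

lemma colSpace_mul_eq_colSpace_pow (hA : (A ^ k).rank = (A ^ (k + 1)).rank)
    (hC : IsCoreEP A C k) : colSpace (A * C) = colSpace (A ^ k) := by
  rw [colSpace_mul, hC.2.1, ← colSpace_mul, ← pow_succ',
    colSpace_pow_eq_of_rank_pow_eq hA k.le_succ]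

lemma mul_mul_eq_of_colSpace_le (hA : (A ^ k).rank = (A ^ (k + 1)).rank)
    (hC : IsCoreEP A C k) (hM : colSpace M ≤ colSpace (A ^ k)) : A * C * M = M :=
  hC.isIdempotentElem_mul.mul_eq_of_colSpace_le (hC.colSpace_mul_eq_colSpace_pow hA ▸ hM)

lemma pow_succ_mul_pow_succ (hA : (A ^ k).rank = (A ^ (k + 1)).rank)
    (hC : IsCoreEP A C k) (j : ℕ) : A ^ (j + 1) * C ^ (j + 1) = A * C := by
  induction j with
  | zero => simp
  | succ j ih =>
    have hfix : A * C * C = C := hC.mul_mul_eq_of_colSpace_le hA hC.2.1.le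
    calc A ^ (j + 2) * C ^ (j + 2) = A * (A ^ (j + 1) * C ^ (j + 1)) * C := by
          rw [pow_succ' A, pow_succ C]; simp only [mul_assoc]
      _ = A * C := by rw [ih, mul_assoc, hfix]

end IsCoreEP

theorem stmt_9_general {n k m : ℕ}
    (A CEP AmDag : Matrix (Fin n) (Fin n) ℂ)
    (hInd : HasIndex A k)
    (hCEP : IsCoreEP A CEP k)
    (hMP : MoorePenroseOf (A ^ m) AmDag) :
    (CEP ^ (m + 1) * A ^ m * (A ^ m * AmDag)).rank = (A ^ k).rank := by
  set X := CEP ^ (m + 1) * A ^ m * (A ^ m * AmDag)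
  have hA := hInd.1
  have hkey : A ^ (m + 1) * X * A ^ (m + k) = A ^ (2 * m + k) := by
    have hP : A ^ m * AmDag * A ^ (m + k) = A ^ (m + k) := by
      rw [pow_add, ← mul_assoc, hMP.1]
    calc A ^ (m + 1) * X * A ^ (m + k)
        = A ^ (m + 1) * CEP ^ (m + 1) * (A ^ m * (A ^ m * AmDag * A ^ (m + k))) := by
          simp only [X, mul_assoc]
      _ = A ^ (2 * m + k) := by
          rw [hP, ← pow_add, hCEP.pow_succ_mul_pow_succ hA, two_mul, add_assoc]
          exact hCEP.mul_mul_eq_of_colSpace_le hA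
            (colSpace_pow_eq_of_rank_pow_eq hA (by omega)).le
  refine le_antisymm ?_ ?_
  · calc X.rank ≤ (CEP ^ (m + 1)).rank := (rank_mul_le_left _ _).trans (rank_mul_le_left _ _)
      _ ≤ CEP.rank := by rw [pow_succ']; exact rank_mul_le_left _ _
      _ = (A ^ k).rank := rank_eq_rank_of_colSpace_eq hCEP.2.1
  · calc (A ^ k).rank = (A ^ (2 * m + k)).rank :=
          rank_eq_rank_of_colSpace_eq (colSpace_pow_eq_of_rank_pow_eq hA (by omega)).symm
      _ ≤ (A ^ (m + 1) * X).rank := hkey ▸ rank_mul_le_left _ _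
      _ ≤ X.rank := rank_mul_le_right _ _

/-- `rank(A^{#_m}) = rank(A^k)`. -/
theorem stmt_9 {n k m : ℕ} (hm : 1 ≤ m)
    (A CEP AmDag : Matrix (Fin n) (Fin n) ℂ)
    (hInd : HasIndex A k)
    (hCEP : IsCoreEP A CEP k)
    (hMP : MoorePenroseOf (A ^ m) AmDag) :
    (CEP ^ (m + 1) * A ^ m * (A ^ m * AmDag)).rank = (A ^ k).rank :=
  stmt_9_general A CEP AmDag hInd hCEP hMP
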